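/- arXiv:2201.00228 — 5 statements merged into one kernel-verified Lean document; each statement's English description precedes it below -/
import Mathlib

section
/- Let A ∈ ℝ^{n×d}, b ∈ ℝ^n, and set M = [A, b] ∈ ℝ^{n×(d+1)} (A with b appended as a last column). Let 0 ≤ ε < 1 and let D ∈ ℝ^{n'×n} be any matrix such that (1−ε)·MᵀM ⪯ Mᵀ Dᵀ D M ⪯ (1+ε)·MᵀM. If x ∈ ℝ^d minimizes x' ↦ ‖D A x' − D b‖₂ over ℝ^d, then ‖A x − b‖₂² ≤ ((1+ε)/(1−ε)) · min_{x' ∈ ℝ^d} ‖A x' − b‖₂². -/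
open Matrix

/-! Sketching preserves the squared residual `‖Ay − b‖² = ‖M (y, −1)‖²` of every candidate `y` up
to the factors `1 ± ε`, since the Loewner sandwich for `MᵀDᵀDM` is a sandwich of quadratic forms.
A minimizer `x` of the sketched residual therefore satisfies
`(1 − ε)‖Ax − b‖² ≤ ‖D(Ax − b)‖² ≤ ‖D(Ax' − b)‖² ≤ (1 + ε)‖Ax' − b‖²`. -/

theorem le_div_mul_of_isMinOn_of_approx {X : Type*} {f g : X → ℝ} {ε : ℝ} (hε : ε < 1)
    (hlow : ∀ y, (1 - ε) * f y ≤ g y) (hhigh : ∀ y, g y ≤ (1 + ε) * f y) {x : X}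
    (hx : IsMinOn g Set.univ x) (x' : X) :
    f x ≤ (1 + ε) / (1 - ε) * f x' := by
  have hchain : (1 - ε) * f x ≤ (1 + ε) * f x' :=
    calc (1 - ε) * f x ≤ g x := hlow x
      _ ≤ g x' := hx (Set.mem_univ x')
      _ ≤ (1 + ε) * f x' := hhigh x'
  rw [div_mul_eq_mul_div, le_div_iff₀ (by linarith)]
  linarith

section QuadraticForm

variable {m k : Type*} [Fintype m] [Fintype k]

theorem dotProduct_transpose_mul_self_mulVec (N : Matrix m k ℝ) (v : k → ℝ) :
    v ⬝ᵥ ((Nᵀ * N) *ᵥ v) = (N *ᵥ v) ⬝ᵥ (N *ᵥ v) := by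
  rw [← mulVec_mulVec, dotProduct_mulVec, vecMul_transpose]

theorem dotProduct_mulVec_le_of_posSemidef_sub {B C : Matrix k k ℝ} (h : (B - C).PosSemidef)
    (v : k → ℝ) : v ⬝ᵥ (C *ᵥ v) ≤ v ⬝ᵥ (B *ᵥ v) := by
  have := h.dotProduct_mulVec_nonneg v
  rw [star_trivial, sub_mulVec, dotProduct_sub] at this
  linarith

theorem dotProduct_sketch_mulVec {p : Type*} [Fintype p] (M : Matrix m k ℝ) (D : Matrix p m ℝ)
    (v : k → ℝ) :
    v ⬝ᵥ ((Mᵀ * Dᵀ * D * M) *ᵥ v) = (D *ᵥ (M *ᵥ v)) ⬝ᵥ (D *ᵥ (M *ᵥ v)) := by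
  rw [← transpose_mul, Matrix.mul_assoc, dotProduct_transpose_mul_self_mulVec, mulVec_mulVec]

theorem mul_dotProduct_le_of_posSemidef_sketch_sub {p : Type*} [Fintype p] {M : Matrix m k ℝ}
    {D : Matrix p m ℝ} {c : ℝ} (h : (Mᵀ * Dᵀ * D * M - c • (Mᵀ * M)).PosSemidef) (v : k → ℝ) :
    c * ((M *ᵥ v) ⬝ᵥ (M *ᵥ v)) ≤ (D *ᵥ (M *ᵥ v)) ⬝ᵥ (D *ᵥ (M *ᵥ v)) := by
  have := dotProduct_mulVec_le_of_posSemidef_sub h v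
  rwa [smul_mulVec, dotProduct_smul, smul_eq_mul, dotProduct_transpose_mul_self_mulVec,
    dotProduct_sketch_mulVec] at this

theorem dotProduct_le_mul_of_posSemidef_sub_sketch {p : Type*} [Fintype p] {M : Matrix m k ℝ}
    {D : Matrix p m ℝ} {c : ℝ} (h : (c • (Mᵀ * M) - Mᵀ * Dᵀ * D * M).PosSemidef) (v : k → ℝ) :
    (D *ᵥ (M *ᵥ v)) ⬝ᵥ (D *ᵥ (M *ᵥ v)) ≤ c * ((M *ᵥ v) ⬝ᵥ (M *ᵥ v)) := by
  have := dotProduct_mulVec_le_of_posSemidef_sub h v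
  rwa [smul_mulVec, dotProduct_smul, smul_eq_mul, dotProduct_transpose_mul_self_mulVec,
    dotProduct_sketch_mulVec] at this

end QuadraticForm

theorem of_snoc_mulVec_snoc_neg_one {n d : ℕ} (A : Matrix (Fin n) (Fin d) ℝ) (b : Fin n → ℝ)
    (y : Fin d → ℝ) :
    (Matrix.of fun i => Fin.snoc (A i) (b i) : Matrix (Fin n) (Fin (d + 1)) ℝ) *ᵥ
      Fin.snoc y (-1) = A *ᵥ y - b := by
  funext i
  simp only [mulVec, dotProduct, of_apply, Fin.sum_univ_castSucc, Fin.snoc_castSucc,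
    Fin.snoc_last, mul_neg, mul_one, Pi.sub_apply]
  ring

theorem sketched_residual_le_of_sqrt_le {n n' d : ℕ} {A : Matrix (Fin n) (Fin d) ℝ} {b : Fin n → ℝ}
    {D : Matrix (Fin n') (Fin n) ℝ} {x y : Fin d → ℝ}
    (h : Real.sqrt (((D * A) *ᵥ x - D *ᵥ b) ⬝ᵥ ((D * A) *ᵥ x - D *ᵥ b)) ≤
      Real.sqrt (((D * A) *ᵥ y - D *ᵥ b) ⬝ᵥ ((D * A) *ᵥ y - D *ᵥ b))) :
    (D *ᵥ (A *ᵥ x - b)) ⬝ᵥ (D *ᵥ (A *ᵥ x - b)) ≤ (D *ᵥ (A *ᵥ y - b)) ⬝ᵥ (D *ᵥ (A *ᵥ y - b)) := by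
  rw [← mulVec_mulVec, ← mulVec_mulVec, ← mulVec_sub, ← mulVec_sub] at h
  exact (Real.sqrt_le_sqrt_iff (Finset.sum_nonneg fun _ _ => mul_self_nonneg _)).mp h

theorem approx_lsr_from_spectral_approx_general {n n' d : ℕ}
    (A : Matrix (Fin n) (Fin d) ℝ) (b : Fin n → ℝ)
    (ε : ℝ) (hε1 : ε < 1)
    (M : Matrix (Fin n) (Fin (d + 1)) ℝ)
    (hM : M = Matrix.of fun i => Fin.snoc (A i) (b i))
    (D : Matrix (Fin n') (Fin n) ℝ)
    (hlow : (Mᵀ * Dᵀ * D * M - (1 - ε) • (Mᵀ * M)).PosSemidef)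
    (hhigh : ((1 + ε) • (Mᵀ * M) - Mᵀ * Dᵀ * D * M).PosSemidef)
    (x : Fin d → ℝ)
    (hx : ∀ x' : Fin d → ℝ,
      Real.sqrt (((D * A) *ᵥ x - D *ᵥ b) ⬝ᵥ ((D * A) *ᵥ x - D *ᵥ b)) ≤
        Real.sqrt (((D * A) *ᵥ x' - D *ᵥ b) ⬝ᵥ ((D * A) *ᵥ x' - D *ᵥ b))) :
    ∀ x' : Fin d → ℝ,
      (A *ᵥ x - b) ⬝ᵥ (A *ᵥ x - b) ≤
        ((1 + ε) / (1 - ε)) * ((A *ᵥ x' - b) ⬝ᵥ (A *ᵥ x' - b)) := by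
  subst hM
  have hresidual := of_snoc_mulVec_snoc_neg_one A b
  refine le_div_mul_of_isMinOn_of_approx (f := fun y => (A *ᵥ y - b) ⬝ᵥ (A *ᵥ y - b))
    (g := fun y => (D *ᵥ (A *ᵥ y - b)) ⬝ᵥ (D *ᵥ (A *ᵥ y - b)))
    hε1 (fun y => ?_) (fun y => ?_) (fun y _ => sketched_residual_le_of_sqrt_le (hx y))
  · simpa only [hresidual] using mul_dotProduct_le_of_posSemidef_sketch_sub hlow (Fin.snoc y (-1))
  · simpa only [hresidual] using dotProduct_le_mul_of_posSemidef_sub_sketch hhigh (Fin.snoc y (-1))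

/-- Lemma 3.3: approximate least-squares regression from spectral
approximation. If `M = [A, b]` and `D` satisfies `(1−ε)MᵀM ⪯ MᵀDᵀDM ⪯ (1+ε)MᵀM`, then an
exact minimizer `x` of `x' ↦ ‖DAx' − Db‖₂` satisfies
`‖Ax − b‖₂² ≤ ((1+ε)/(1−ε)) · min_{x'} ‖Ax' − b‖₂²`. -/
theorem approx_lsr_from_spectral_approx {n n' d : ℕ}
    (A : Matrix (Fin n) (Fin d) ℝ) (b : Fin n → ℝ)
    (ε : ℝ) (hε0 : 0 ≤ ε) (hε1 : ε < 1)
    (M : Matrix (Fin n) (Fin (d + 1)) ℝ)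
    (hM : M = Matrix.of fun i => Fin.snoc (A i) (b i))
    (D : Matrix (Fin n') (Fin n) ℝ)
    (hlow : (Mᵀ * Dᵀ * D * M - (1 - ε) • (Mᵀ * M)).PosSemidef)
    (hhigh : ((1 + ε) • (Mᵀ * M) - Mᵀ * Dᵀ * D * M).PosSemidef)
    (x : Fin d → ℝ)
    (hx : ∀ x' : Fin d → ℝ,
      Real.sqrt (((D * A) *ᵥ x - D *ᵥ b) ⬝ᵥ ((D * A) *ᵥ x - D *ᵥ b)) ≤
        Real.sqrt (((D * A) *ᵥ x' - D *ᵥ b) ⬝ᵥ ((D * A) *ᵥ x' - D *ᵥ b))) :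
    ∀ x' : Fin d → ℝ,
      (A *ᵥ x - b) ⬝ᵥ (A *ᵥ x - b) ≤
        ((1 + ε) / (1 - ε)) * ((A *ᵥ x' - b) ⬝ᵥ (A *ᵥ x' - b)) :=
  approx_lsr_from_spectral_approx_general A b ε hε1 M hM D hlow hhigh x hx
end

section
/- Let d ≥ 1, B ∈ {0,1}^{d×d}, and z ∈ {0,1}^d with z ≠ 0. Let H = [[2·I_d, (1/d)·B], [(1/d)·Bᵀ, 2·I_d]] ∈ ℝ^{2d×2d} and z̄ = (0_d, z/‖z‖₂) ∈ ℝ^{2d}. Suppose ŷ = (y', y'') ∈ ℝ^{2d} satisfies ‖ŷ − H z̄‖₂ ≤ 1/(4d²). Define y ∈ {0,1}^d by y_i = 1 if d‖z‖₂ · y'_i ≥ 1/2 and y_i = 0 otherwise. Then for every i ∈ [d], y_i = 1 if and only if Σ_j B_{ij} z_j ≥ 1; that is, y equals the Boolean (OR–AND) matrix-vector product of B and z. -/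
/-!
The first block of `H z̄` is `B z / (d ‖z‖₂)`, so `d ‖z‖₂ y'ᵢ` differs from the integer
`(B z)ᵢ ∈ {0} ∪ [1, ∞)` by at most `d ‖z‖₂ · ‖ŷ - H z̄‖₂ ≤ d · d / (4d²) = 1/4`, using
`‖z‖₂ ≤ √d ≤ d`. Thresholding at `1/2` therefore reads off whether `(B z)ᵢ ≥ 1`.
-/

open Matrix

theorem Finset.sum_eq_zero_or_one_le {ι R : Type*} [Semiring R] [PartialOrder R] [IsOrderedRing R]
    (s : Finset ι) (f : ι → R) (hf : ∀ i ∈ s, f i = 0 ∨ 1 ≤ f i) :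
    ∑ i ∈ s, f i = 0 ∨ 1 ≤ ∑ i ∈ s, f i := by
  by_cases hzero : ∀ i ∈ s, f i = 0
  · exact .inl (Finset.sum_eq_zero hzero)
  · push Not at hzero
    obtain ⟨j, hj, hfj⟩ := hzero
    have hnonneg : ∀ i ∈ s, 0 ≤ f i := fun i hi =>
      (hf i hi).elim (fun h => h.ge) (zero_le_one.trans)
    exact .inr (((hf j hj).resolve_left hfj).trans (Finset.single_le_sum hnonneg hj))

theorem dotProduct_self_le_card {ι R : Type*} [Fintype ι] [Ring R] [LinearOrder R]
    [IsStrictOrderedRing R] (v : ι → R) (hv : ∀ i, |v i| ≤ 1) :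
    v ⬝ᵥ v ≤ Fintype.card ι := by
  have hsq : ∀ i ∈ Finset.univ, v i * v i ≤ 1 := fun i _ => by
    rw [← abs_mul_abs_self]
    exact mul_le_one₀ (hv i) (abs_nonneg _) (hv i)
  simpa [dotProduct] using Finset.sum_le_card_nsmul Finset.univ (fun i => v i * v i) 1 hsq

theorem abs_apply_le_sqrt_dotProduct_self {ι : Type*} [Fintype ι] (v : ι → ℝ) (i : ι) :
    |v i| ≤ √(v ⬝ᵥ v) :=
  Real.abs_le_sqrt <| by
    simpa [sq, dotProduct] using
      Finset.single_le_sum (f := fun j => v j * v j) (fun j _ => mul_self_nonneg _)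
        (Finset.mem_univ i)

theorem fromBlocks_mulVec_elim_zero_inl {l m n o α : Type*} [Fintype l] [Fintype m]
    [NonUnitalNonAssocSemiring α] (A : Matrix n l α) (B : Matrix n m α) (C : Matrix o l α)
    (D : Matrix o m α) (v : m → α) (i : n) :
    (fromBlocks A B C D *ᵥ Sum.elim 0 v) (Sum.inl i) = (B *ᵥ v) i := by
  simp [fromBlocks_mulVec]

theorem sqrt_dotProduct_self_smul_mulVec_normalize {m n : Type*} [Fintype n]
    (M : Matrix m n ℝ) (v : n → ℝ) :
    √(v ⬝ᵥ v) • (M *ᵥ fun j => v j / √(v ⬝ᵥ v)) = M *ᵥ v := by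
  by_cases hv : v = 0
  · simp [hv] -- both sides vanish; the division by `√0 = 0` is harmless
  have hs : √(v ⬝ᵥ v) ≠ 0 := by
    rwa [Ne, Real.sqrt_eq_zero (x := v ⬝ᵥ v) (Finset.sum_nonneg fun j _ => mul_self_nonneg _),
      dotProduct_self_eq_zero]
  have : (fun j => v j / √(v ⬝ᵥ v)) = (√(v ⬝ᵥ v))⁻¹ • v := by
    ext j; simp [div_eq_inv_mul]
  rw [this, mulVec_smul, smul_smul, mul_inv_cancel₀ hs, one_smul]

theorem eq_one_iff_one_le_of_abs_sub_lt_half {t S y : ℝ} (hS : S = 0 ∨ 1 ≤ S)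
    (ht : |t - S| < 1 / 2) (hy1 : 1 / 2 ≤ t → y = 1) (hy0 : t < 1 / 2 → y = 0) :
    y = 1 ↔ 1 ≤ S := by
  obtain ⟨hlo, hhi⟩ := abs_lt.1 ht
  rcases hS with hS | hS
  · rw [hy0 (by linarith), hS]; norm_num
  · exact iff_of_true (hy1 (by linarith)) hS

theorem omv_exact_recovery_general {d : ℕ}
    (B : Matrix (Fin d) (Fin d) ℝ) (hB : ∀ i j, B i j = 0 ∨ B i j = 1)
    (z : Fin d → ℝ) (hz : ∀ i, z i = 0 ∨ z i = 1)
    (H : Matrix (Fin d ⊕ Fin d) (Fin d ⊕ Fin d) ℝ)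
    (hH : H = Matrix.fromBlocks
      ((2 : ℝ) • (1 : Matrix (Fin d) (Fin d) ℝ)) ((1 / (d : ℝ)) • B)
      ((1 / (d : ℝ)) • Bᵀ) ((2 : ℝ) • (1 : Matrix (Fin d) (Fin d) ℝ)))
    (zbar : Fin d ⊕ Fin d → ℝ)
    (hzbar : zbar = Sum.elim (0 : Fin d → ℝ) (fun i => z i / Real.sqrt (z ⬝ᵥ z)))
    (yhat : Fin d ⊕ Fin d → ℝ)
    (hyhat : Real.sqrt ((yhat - H *ᵥ zbar) ⬝ᵥ (yhat - H *ᵥ zbar)) ≤ 1 / (4 * (d : ℝ) ^ 2))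
    (y : Fin d → ℝ)
    (hy1 : ∀ i, (1 : ℝ) / 2 ≤ (d : ℝ) * Real.sqrt (z ⬝ᵥ z) * yhat (Sum.inl i) → y i = 1)
    (hy0 : ∀ i, (d : ℝ) * Real.sqrt (z ⬝ᵥ z) * yhat (Sum.inl i) < (1 : ℝ) / 2 → y i = 0) :
    ∀ i, y i = 1 ↔ 1 ≤ ∑ j, B i j * z j := by
  intro i
  have hd : (1 : ℝ) ≤ d := by exact_mod_cast i.pos
  have hzd : √(z ⬝ᵥ z) ≤ d := by
    refine (Real.sqrt_le_left (by positivity)).2 ((dotProduct_self_le_card z fun j => ?_).trans ?_)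
    · rcases hz j with h | h <;> simp [h]
    · simpa using le_self_pow₀ hd two_ne_zero
  have hHz : d * √(z ⬝ᵥ z) * (H *ᵥ zbar) (Sum.inl i) = ∑ j, B i j * z j := by
    rw [hH, hzbar, fromBlocks_mulVec_elim_zero_inl, smul_mulVec]
    change _ = (B *ᵥ z) i
    rw [← sqrt_dotProduct_self_smul_mulVec_normalize B z]
    simp only [Pi.smul_apply, smul_eq_mul]
    field_simp
  have herr : |yhat (Sum.inl i) - (H *ᵥ zbar) (Sum.inl i)| ≤ 1 / (4 * d ^ 2) :=
    (abs_apply_le_sqrt_dotProduct_self (yhat - H *ᵥ zbar) (Sum.inl i)).trans hyhat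
  refine eq_one_iff_one_le_of_abs_sub_lt_half
    (Finset.sum_eq_zero_or_one_le _ _ fun j _ => ?_) ?_ (hy1 i) (hy0 i)
  · rcases hB i j with h | h <;> rcases hz j with h' | h' <;> simp [h, h']
  calc |d * √(z ⬝ᵥ z) * yhat (Sum.inl i) - ∑ j, B i j * z j|
      = d * √(z ⬝ᵥ z) * |yhat (Sum.inl i) - (H *ᵥ zbar) (Sum.inl i)| := by
        rw [← hHz, ← mul_sub, abs_mul, abs_of_nonneg (by positivity)]
    _ ≤ d * d * (1 / (4 * d ^ 2)) := by gcongr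
    _ < 1 / 2 := by field_simp; norm_num

/-- exact-recovery step in the proof of Lemma 4.1. Given a Boolean matrix
`B` and a nonzero Boolean vector `z`, set `H = [[2I, B/d], [Bᵀ/d, 2I]]` and
`z̄ = (0, z/‖z‖₂)`. If `ŷ` satisfies `‖ŷ − Hz̄‖₂ ≤ 1/(4d²)` and `y` is obtained by
thresholding `d‖z‖₂ · ŷ'` at `1/2` (where `ŷ'` is the first block of `ŷ`), then `y` equals
the Boolean (OR–AND) matrix-vector product of `B` and `z`:
for every `i`, `y i = 1 ↔ Σ_j B i j * z j ≥ 1`. -/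
theorem omv_exact_recovery {d : ℕ} (hd : 1 ≤ d)
    (B : Matrix (Fin d) (Fin d) ℝ) (hB : ∀ i j, B i j = 0 ∨ B i j = 1)
    (z : Fin d → ℝ) (hz : ∀ i, z i = 0 ∨ z i = 1) (hz0 : z ≠ 0)
    (H : Matrix (Fin d ⊕ Fin d) (Fin d ⊕ Fin d) ℝ)
    (hH : H = Matrix.fromBlocks
      ((2 : ℝ) • (1 : Matrix (Fin d) (Fin d) ℝ)) ((1 / (d : ℝ)) • B)
      ((1 / (d : ℝ)) • Bᵀ) ((2 : ℝ) • (1 : Matrix (Fin d) (Fin d) ℝ)))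
    (zbar : Fin d ⊕ Fin d → ℝ)
    (hzbar : zbar = Sum.elim (0 : Fin d → ℝ) (fun i => z i / Real.sqrt (z ⬝ᵥ z)))
    (yhat : Fin d ⊕ Fin d → ℝ)
    (hyhat : Real.sqrt ((yhat - H *ᵥ zbar) ⬝ᵥ (yhat - H *ᵥ zbar)) ≤ 1 / (4 * (d : ℝ) ^ 2))
    (y : Fin d → ℝ)
    (hy1 : ∀ i, (1 : ℝ) / 2 ≤ (d : ℝ) * Real.sqrt (z ⬝ᵥ z) * yhat (Sum.inl i) → y i = 1)
    (hy0 : ∀ i, (d : ℝ) * Real.sqrt (z ⬝ᵥ z) * yhat (Sum.inl i) < (1 : ℝ) / 2 → y i = 0) :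
    ∀ i, y i = 1 ↔ 1 ≤ ∑ j, B i j * z j :=
  omv_exact_recovery_general B hB z hz H hH zbar hzbar yhat hyhat y hy1 hy0
end

section
/- Let d₁ ∈ {0,…,d} and let U ∈ ℝ^{d×d₁} have orthonormal columns (UᵀU = I). For v ∈ ℝ^d write v_U = UUᵀv and v_{U⊥} = v − UUᵀv. Let α = 1/3, β ≥ 0, and K ≥ 1 with 4K²β ≤ 1. Let z_r ∈ ℝ^d with ‖z_r‖₂ ≤ 2, and suppose vectors w_0, w_1, …, w_K and y_1, …, y_K in ℝ^d satisfy: ‖w_0 − (z_r)_{U⊥}‖₂ ≤ α‖(z_r)_{U⊥}‖₂ + β‖z_r‖₂; and for each k ∈ [K], ‖y_k − (w_{k−1})_U‖₂ ≤ α‖(w_{k−1})_U‖₂ + β‖w_{k−1}‖₂ and w_k = w_{k−1} − y_k. Define δ_0 = (z_r)_{U⊥} − w_0 and δ_k = y_k + (δ_{k−1})_U for k ∈ [K]. Then for every k ∈ [K]: (i) w_k = (z_r)_{U⊥} − Σ_{τ=0}^{k−1} (δ_τ)_{U⊥} − δ_k; (ii) ‖δ_k‖₂ ≤ α‖(δ_{k−1})_U‖₂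 + 4β; and (iii) ‖δ_k‖₂ ≤ α^{k+1}‖(z_r)_{U⊥}‖₂ + 4(k+1)β. -/
/-!
The decomposition `w_k = (z_r)_{U⊥} - Σ_{τ<k} (δ_τ)_{U⊥} - δ_k` is pure bookkeeping. Projecting it
onto `U` kills every `U⊥` term, so `(w_{k-1})_U = -(δ_{k-1})_U` and `δ_k = y_k - (w_{k-1})_U` is exactly
the error of the `k`-th oracle call. Hence `‖δ_k‖ ≤ ‖(δ_{k-1})_U‖ / 3 + β ‖w_{k-1}‖`, and a strong
induction closes once `‖w_{k-1}‖ ≤ 4`: the decomposition bounds `‖w_{k-1}‖` by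
`‖(z_r)_{U⊥}‖ + Σ_{τ<k} ‖δ_τ‖`, where the geometric part of the error bounds sums to at most `1`
and the linear part to at most `4K²β ≤ 1`.
-/

open Matrix

/-- Euclidean norm of a vector in `ℝ^d`. -/
noncomputable def nrm {d : ℕ} (v : Fin d → ℝ) : ℝ := Real.sqrt (v ⬝ᵥ v)

/-- Orthogonal projection onto the column span of `U`: `v_U = UUᵀv`. -/
def pU {d dOne : ℕ} (U : Matrix (Fin d) (Fin dOne) ℝ) (v : Fin d → ℝ) : Fin d → ℝ :=
  U *ᵥ (Uᵀ *ᵥ v)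

/-- Complementary projection: `v_{U⊥} = v − UUᵀv`. -/
def pPerp {d dOne : ℕ} (U : Matrix (Fin d) (Fin dOne) ℝ) (v : Fin d → ℝ) : Fin d → ℝ :=
  v - pU U v

open Finset

section Norm

variable {d : ℕ}

lemma nrm_eq_norm_toLp (v : Fin d → ℝ) :
    nrm v = ‖(WithLp.toLp 2 v : EuclideanSpace ℝ (Fin d))‖ := by
  simp [nrm, EuclideanSpace.norm_eq, dotProduct, sq]

lemma nrm_nonneg (v : Fin d → ℝ) : 0 ≤ nrm v := Real.sqrt_nonneg _

lemma nrm_neg (v : Fin d → ℝ) : nrm (-v) = nrm v := by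
  simp only [nrm_eq_norm_toLp, WithLp.toLp_neg, norm_neg]

lemma nrm_sub_rev (u v : Fin d → ℝ) : nrm (u - v) = nrm (v - u) := by
  simp only [nrm_eq_norm_toLp, WithLp.toLp_sub, norm_sub_rev]

lemma nrm_sub_le (u v : Fin d → ℝ) : nrm (u - v) ≤ nrm u + nrm v := by
  simp only [nrm_eq_norm_toLp, WithLp.toLp_sub]
  exact norm_sub_le _ _

lemma nrm_sum_le {ι : Type*} (s : Finset ι) (f : ι → Fin d → ℝ) :
    nrm (∑ i ∈ s, f i) ≤ ∑ i ∈ s, nrm (f i) := by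
  simp only [nrm_eq_norm_toLp, WithLp.toLp_sum]
  exact norm_sum_le _ _

end Norm

section Projection

variable {d dOne : ℕ} {U : Matrix (Fin d) (Fin dOne) ℝ}

lemma pU_eq_mulVecLin (U : Matrix (Fin d) (Fin dOne) ℝ) (v : Fin d → ℝ) :
    pU U v = (U * Uᵀ).mulVecLin v := by
  rw [pU, mulVec_mulVec, mulVecLin_apply]

lemma pU_sub (U : Matrix (Fin d) (Fin dOne) ℝ) (u v : Fin d → ℝ) :
    pU U (u - v) = pU U u - pU U v := by
  simp only [pU_eq_mulVecLin, map_sub]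

lemma pU_sum (U : Matrix (Fin d) (Fin dOne) ℝ) {ι : Type*} (s : Finset ι) (f : ι → Fin d → ℝ) :
    pU U (∑ i ∈ s, f i) = ∑ i ∈ s, pU U (f i) := by
  simp only [pU_eq_mulVecLin, map_sum]

lemma pU_pU (hU : Uᵀ * U = 1) (v : Fin d → ℝ) : pU U (pU U v) = pU U v := by
  simp only [pU, mulVec_mulVec, ← Matrix.mul_assoc, hU, Matrix.mul_one]

lemma pU_pPerp (hU : Uᵀ * U = 1) (v : Fin d → ℝ) : pU U (pPerp U v) = 0 := by
  rw [pPerp, pU_sub, pU_pU hU, sub_self]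

lemma pU_sub_sum_pPerp (hU : Uᵀ * U = 1) {ι : Type*} (s : Finset ι) (a : Fin d → ℝ)
    (f : ι → Fin d → ℝ) (b : Fin d → ℝ) :
    pU U (pPerp U a - ∑ i ∈ s, pPerp U (f i) - b) = -pU U b := by
  simp only [pU_sub, pU_sum, pU_pPerp hU, sum_const_zero, sub_self, zero_sub]

/-- `UUᵀ` is symmetric, so `u_U ⬝ v_{U⊥} = u ⬝ (v_{U⊥})_U = 0`. -/
lemma dotProduct_pU_pPerp (hU : Uᵀ * U = 1) (u v : Fin d → ℝ) : pU U u ⬝ᵥ pPerp U v = 0 := by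
  have hsymm : (U * Uᵀ)ᵀ = U * Uᵀ := by rw [transpose_mul, transpose_transpose]
  rw [pU, mulVec_mulVec, dotProduct_comm, dotProduct_mulVec, ← hsymm, vecMul_transpose,
    ← mulVec_mulVec, ← pU, pU_pPerp hU, zero_dotProduct]

lemma dotProduct_self_eq_pU_add_pPerp (hU : Uᵀ * U = 1) (v : Fin d → ℝ) :
    v ⬝ᵥ v = pU U v ⬝ᵥ pU U v + pPerp U v ⬝ᵥ pPerp U v := by
  have hv : v = pU U v + pPerp U v := (add_sub_cancel _ _).symm
  conv_lhs => rw [hv]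
  rw [add_dotProduct, dotProduct_add, dotProduct_add, dotProduct_pU_pPerp hU,
    dotProduct_comm (pPerp U v), dotProduct_pU_pPerp hU, add_zero, zero_add]

lemma nrm_pU_le (hU : Uᵀ * U = 1) (v : Fin d → ℝ) : nrm (pU U v) ≤ nrm v := by
  refine Real.sqrt_le_sqrt ?_
  rw [dotProduct_self_eq_pU_add_pPerp hU v]
  exact le_add_of_nonneg_right (sum_nonneg fun _ _ => mul_self_nonneg _)

lemma nrm_pPerp_le (hU : Uᵀ * U = 1) (v : Fin d → ℝ) : nrm (pPerp U v) ≤ nrm v := by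
  refine Real.sqrt_le_sqrt ?_
  rw [dotProduct_self_eq_pU_add_pPerp hU v]
  exact le_add_of_nonneg_left (sum_nonneg fun _ _ => mul_self_nonneg _)

end Projection

lemma sum_range_third_pow_succ_le (n : ℕ) : ∑ τ ∈ range n, (1 / 3 : ℝ) ^ (τ + 1) ≤ 1 / 2 := by
  have h : ∑ τ ∈ range n, (1 / 3 : ℝ) ^ (τ + 1) = (1 - (1 / 3) ^ n) / 2 := by
    induction n with
    | zero => simp
    | succ n ih => rw [sum_range_succ, ih, pow_succ]; ring
  rw [h]
  linarith [pow_nonneg (by norm_num : (0 : ℝ) ≤ 1 / 3) n]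

lemma sum_error_bounds_le_two {a β : ℝ} (ha : a ≤ 2) (hβ : 0 ≤ β) {n K : ℕ}
    (hn : n ≤ K) (hKβ : 4 * (K : ℝ) ^ 2 * β ≤ 1) :
    ∑ τ ∈ range n, ((1 / 3 : ℝ) ^ (τ + 1) * a + 4 * ((τ : ℝ) + 1) * β) ≤ 2 := by
  have hgeom : ∑ τ ∈ range n, (1 / 3 : ℝ) ^ (τ + 1) * a ≤ 1 := by
    rw [← sum_mul]
    nlinarith [sum_range_third_pow_succ_le n,
      sum_nonneg fun τ (_ : τ ∈ range n) => pow_nonneg (by norm_num : (0 : ℝ) ≤ 1 / 3) (τ + 1)]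
  have hlin : ∑ τ ∈ range n, 4 * ((τ : ℝ) + 1) * β ≤ 1 := by
    have hnK : (n : ℝ) ≤ K := by exact_mod_cast hn
    have hterm : ∀ τ ∈ range n, 4 * ((τ : ℝ) + 1) * β ≤ 4 * K * β := by
      intro τ hτ
      have hτn : (τ : ℝ) + 1 ≤ n := by exact_mod_cast mem_range.mp hτ
      nlinarith
    have hsum := sum_le_card_nsmul _ _ _ hterm
    rw [card_range, nsmul_eq_mul] at hsum
    nlinarith [mul_le_mul_of_nonneg_right hnK (by positivity : (0 : ℝ) ≤ 4 * K * β)]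
  rw [sum_add_distrib]
  linarith

section InnerLoop

variable {d dOne : ℕ} {U : Matrix (Fin d) (Fin dOne) ℝ} {β : ℝ} {K : ℕ} {zr : Fin d → ℝ}
  {w y δ : ℕ → Fin d → ℝ}

lemma inner_loop_w_eq (hw : ∀ k, 1 ≤ k → k ≤ K → w k = w (k - 1) - y k)
    (hδ0 : δ 0 = pPerp U zr - w 0) (hδ : ∀ k, 1 ≤ k → k ≤ K → δ k = y k + pU U (δ (k - 1))) :
    ∀ k ≤ K, w k = pPerp U zr - ∑ τ ∈ range k, pPerp U (δ τ) - δ k := by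
  intro k hk
  induction k with
  | zero => rw [hδ0, sum_range_zero]; abel
  | succ k ih =>
    rw [hw (k + 1) (by omega) hk, hδ (k + 1) (by omega) hk, Nat.add_sub_cancel, ih (by omega),
      sum_range_succ]
    simp only [pPerp]
    abel

lemma inner_loop_δ_eq_oracle_error (hU : Uᵀ * U = 1)
    (hδ : ∀ k, 1 ≤ k → k ≤ K → δ k = y k + pU U (δ (k - 1))) {k : ℕ} (hk : k + 1 ≤ K)
    (hwk : w k = pPerp U zr - ∑ τ ∈ range k, pPerp U (δ τ) - δ k) :
    δ (k + 1) = y (k + 1) - pU U (w k) := by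
  rw [hδ (k + 1) (by omega) hk, Nat.add_sub_cancel, hwk, pU_sub_sum_pPerp hU, sub_neg_eq_add]

lemma inner_loop_nrm_δ_succ_le (hU : Uᵀ * U = 1)
    (hy : ∀ k, 1 ≤ k → k ≤ K →
      nrm (y k - pU U (w (k - 1))) ≤ (1 / 3) * nrm (pU U (w (k - 1))) + β * nrm (w (k - 1)))
    (hδ : ∀ k, 1 ≤ k → k ≤ K → δ k = y k + pU U (δ (k - 1))) {k : ℕ} (hk : k + 1 ≤ K)
    (hwk : w k = pPerp U zr - ∑ τ ∈ range k, pPerp U (δ τ) - δ k) :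
    nrm (δ (k + 1)) ≤ (1 / 3) * nrm (pU U (δ k)) + β * nrm (w k) := by
  have hwU : nrm (pU U (w k)) = nrm (pU U (δ k)) := by
    rw [hwk, pU_sub_sum_pPerp hU, nrm_neg]
  rw [inner_loop_δ_eq_oracle_error hU hδ hk hwk, ← hwU]
  simpa using hy (k + 1) (by omega) hk

lemma inner_loop_nrm_w_le (hU : Uᵀ * U = 1) {k : ℕ}
    (hwk : w k = pPerp U zr - ∑ τ ∈ range k, pPerp U (δ τ) - δ k) :
    nrm (w k) ≤ nrm (pPerp U zr) + ∑ τ ∈ range (k + 1), nrm (δ τ) := by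
  have hsum : nrm (∑ τ ∈ range k, pPerp U (δ τ)) ≤ ∑ τ ∈ range k, nrm (δ τ) :=
    (nrm_sum_le _ _).trans (sum_le_sum fun τ _ => nrm_pPerp_le hU _)
  rw [hwk, sum_range_succ]
  linarith [nrm_sub_le (pPerp U zr - ∑ τ ∈ range k, pPerp U (δ τ)) (δ k),
    nrm_sub_le (pPerp U zr) (∑ τ ∈ range k, pPerp U (δ τ))]

lemma inner_loop_nrm_w_le_four (hU : Uᵀ * U = 1) (hβ : 0 ≤ β)
    (hKβ : 4 * (K : ℝ) ^ 2 * β ≤ 1) (hzr : nrm zr ≤ 2) {k : ℕ} (hk : k + 1 ≤ K)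
    (hwk : w k = pPerp U zr - ∑ τ ∈ range k, pPerp U (δ τ) - δ k)
    (hδle : ∀ τ ≤ k,
      nrm (δ τ) ≤ (1 / 3 : ℝ) ^ (τ + 1) * nrm (pPerp U zr) + 4 * ((τ : ℝ) + 1) * β) :
    nrm (w k) ≤ 4 := by
  have hz : nrm (pPerp U zr) ≤ 2 := (nrm_pPerp_le hU zr).trans hzr
  have hsum := (sum_le_sum fun τ hτ => hδle τ (Nat.lt_succ_iff.mp (mem_range.mp hτ))).trans
    (sum_error_bounds_le_two hz hβ hk hKβ)
  linarith [inner_loop_nrm_w_le hU hwk]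

lemma inner_loop_nrm_δ_le (hU : Uᵀ * U = 1) (hβ : 0 ≤ β) (hKβ : 4 * (K : ℝ) ^ 2 * β ≤ 1)
    (hzr : nrm zr ≤ 2)
    (hw0 : nrm (w 0 - pPerp U zr) ≤ (1 / 3) * nrm (pPerp U zr) + β * nrm zr)
    (hy : ∀ k, 1 ≤ k → k ≤ K →
      nrm (y k - pU U (w (k - 1))) ≤ (1 / 3) * nrm (pU U (w (k - 1))) + β * nrm (w (k - 1)))
    (hw : ∀ k, 1 ≤ k → k ≤ K → w k = w (k - 1) - y k)
    (hδ0 : δ 0 = pPerp U zr - w 0)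
    (hδ : ∀ k, 1 ≤ k → k ≤ K → δ k = y k + pU U (δ (k - 1))) :
    ∀ k ≤ K, nrm (δ k) ≤ (1 / 3 : ℝ) ^ (k + 1) * nrm (pPerp U zr) + 4 * ((k : ℝ) + 1) * β := by
  intro k hk
  induction k using Nat.strong_induction_on with
  | _ k ih =>
    cases k with
    | zero =>
      rw [hδ0, nrm_sub_rev]
      nlinarith [nrm_nonneg zr]
    | succ k =>
      have hwk := inner_loop_w_eq hw hδ0 hδ k (by omega)
      have hw4 := inner_loop_nrm_w_le_four hU hβ hKβ hzr hk hwk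
        fun τ hτ => ih τ (by omega) (by omega)
      have hstep := inner_loop_nrm_δ_succ_le hU hy hδ hk hwk
      have hδk := (nrm_pU_le hU (δ k)).trans (ih k (by omega) (by omega))
      push_cast
      rw [pow_succ]
      nlinarith [Nat.cast_nonneg (α := ℝ) k]

end InnerLoop

theorem inner_loop_induction_general {d dOne : ℕ}
    (U : Matrix (Fin d) (Fin dOne) ℝ) (hU : Uᵀ * U = 1)
    (β : ℝ) (hβ : 0 ≤ β)
    (K : ℕ) (hKβ : 4 * (K : ℝ) ^ 2 * β ≤ 1)
    (zr : Fin d → ℝ) (hzr : nrm zr ≤ 2)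
    (w y δ : ℕ → Fin d → ℝ)
    (hw0 : nrm (w 0 - pPerp U zr) ≤ (1 / 3) * nrm (pPerp U zr) + β * nrm zr)
    (hy : ∀ k, 1 ≤ k → k ≤ K →
      nrm (y k - pU U (w (k - 1))) ≤ (1 / 3) * nrm (pU U (w (k - 1))) + β * nrm (w (k - 1)))
    (hw : ∀ k, 1 ≤ k → k ≤ K → w k = w (k - 1) - y k)
    (hδ0 : δ 0 = pPerp U zr - w 0)
    (hδ : ∀ k, 1 ≤ k → k ≤ K → δ k = y k + pU U (δ (k - 1))) :
    ∀ k, 1 ≤ k → k ≤ K →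
      w k = pPerp U zr - (∑ τ ∈ Finset.range k, pPerp U (δ τ)) - δ k ∧
      nrm (δ k) ≤ (1 / 3) * nrm (pU U (δ (k - 1))) + 4 * β ∧
      nrm (δ k) ≤ (1 / 3 : ℝ) ^ (k + 1) * nrm (pPerp U zr) + 4 * ((k : ℝ) + 1) * β := by
  have hwEq := inner_loop_w_eq hw hδ0 hδ
  have hδle := inner_loop_nrm_δ_le hU hβ hKβ hzr hw0 hy hw hδ0 hδ
  rintro (_ | k) hk1 hk
  · omega
  refine ⟨hwEq (k + 1) hk, ?_, hδle (k + 1) hk⟩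
  have hw4 := inner_loop_nrm_w_le_four hU hβ hKβ hzr hk (hwEq k (by omega))
    fun τ hτ => hδle τ (by omega)
  have hstep := inner_loop_nrm_δ_succ_le hU hy hδ hk (hwEq k (by omega))
  rw [Nat.add_sub_cancel]
  nlinarith

/-- Lemma 4.7: inner loop of the hardness-amplification procedure.
With `α = 1/3` and `(α, β)`-approximate projection oracles producing `w₀` and `y_k`,
the error vectors `δ_k` satisfy the stated recursion and geometric decay bounds. -/
theorem inner_loop_induction {d dOne : ℕ} (hdOne : dOne ≤ d)
    (U : Matrix (Fin d) (Fin dOne) ℝ) (hU : Uᵀ * U = 1)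
    (β : ℝ) (hβ : 0 ≤ β)
    (K : ℕ) (hK : 1 ≤ K) (hKβ : 4 * (K : ℝ) ^ 2 * β ≤ 1)
    (zr : Fin d → ℝ) (hzr : nrm zr ≤ 2)
    (w y δ : ℕ → Fin d → ℝ)
    (hw0 : nrm (w 0 - pPerp U zr) ≤ (1 / 3) * nrm (pPerp U zr) + β * nrm zr)
    (hy : ∀ k, 1 ≤ k → k ≤ K →
      nrm (y k - pU U (w (k - 1))) ≤ (1 / 3) * nrm (pU U (w (k - 1))) + β * nrm (w (k - 1)))
    (hw : ∀ k, 1 ≤ k → k ≤ K → w k = w (k - 1) - y k)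
    (hδ0 : δ 0 = pPerp U zr - w 0)
    (hδ : ∀ k, 1 ≤ k → k ≤ K → δ k = y k + pU U (δ (k - 1))) :
    ∀ k, 1 ≤ k → k ≤ K →
      w k = pPerp U zr - (∑ τ ∈ Finset.range k, pPerp U (δ τ)) - δ k ∧
      nrm (δ k) ≤ (1 / 3) * nrm (pU U (δ (k - 1))) + 4 * β ∧
      nrm (δ k) ≤ (1 / 3 : ℝ) ^ (k + 1) * nrm (pPerp U zr) + 4 * ((k : ℝ) + 1) * β :=
  inner_loop_induction_general U hU β hβ K hKβ zr hzr w y δ hw0 hy hw hδ0 hδ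
end

section
/- There is a constant D₀ such that the following holds for all d ≥ D₀. Let d₁ ∈ [d], let U ∈ ℝ^{d×d₁} and U⊥ ∈ ℝ^{d×(d−d₁)} have orthonormal columns with [U, U⊥] orthogonal. For v ∈ ℝ^d write v_U = UUᵀv and v_{U⊥} = U⊥U⊥ᵀv. Let λ = d^{−40}, ε = 1/100, x* = (1/√d)·Σ_{j=1}^{d−d₁} U⊥_{·,j}, and let z ∈ ℝ^d satisfy ‖z‖₂ ≤ 1 and ‖z_U‖₂ ≥ 1/d⁴. Set Δ = (10 − ⟨z_{U⊥}, x*⟩)/‖z_U‖₂, let L(x) = ‖U⊥ᵀ x − (1/√d)·1_{d−d₁}‖₂² + (1/100)·(⟨z, x⟩ − 10)² + λ‖x‖₂², and let V = [U⊥, z_U/‖z_U‖₂]. Then Δ ∈ (9, 11d⁴], and every x ∈ ℝ^d with L(x) ≤ (1+ε)²·λ·(Δ² + 1) satisfies: (a) ‖U⊥U⊥ᵀ x − x*‖₂ ≤ 20 d⁴ √λ; (b) |⟨x, z_U⟩ − (10 − ⟨z_{U⊥}, x*⟩)| ≤ 200 d⁴ √λ; and (c) ‖(I − V Vᵀ)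 x‖₂ ≤ 2√ε · Δ. -/
/-!
Every term of `L` is at most the budget `(1 + ε)² λ (Δ² + 1) ≤ (12 d⁴ √λ)²`. Since `U⊥` is an
isometry, the first term is `‖U⊥U⊥ᵀx − x*‖²`, which gives (a). The second term controls
`⟨z, x⟩ − 10`; splitting `z = z_U + z_{U⊥}` turns this into (b) up to the error
`⟨U⊥ᵀz, U⊥ᵀx − 1/√d⟩`, which is again bounded by (a). For (c), `VVᵀ` is the orthogonal
projection onto `range U⊥ ⊕ ℝ z_U`, so `‖(I − VVᵀ)x‖² = ‖x‖² − ‖U⊥ᵀx‖² − ⟨z_U, x⟩²/‖z_U‖²`.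
By (b) and `‖z_U‖ ≥ d⁻⁴` the last term is at least `(Δ − o(1))²`, while the ridge term gives
`‖x‖² ≤ (1 + ε)²(Δ² + 1)`; what is left is `(2ε + ε²)Δ² + O(1) ≤ 4εΔ²` because `Δ > 9`.
Finally `Δ ∈ (9, 11d⁴]` because `‖x*‖² = (d − d₁)/d < 1` forces `|⟨z_{U⊥}, x*⟩| < 1`.
-/

open Matrix

section DotProduct

variable {m n : Type*} [Fintype m] [Fintype n]

lemma dotProduct_self_nonneg (v : n → ℝ) : 0 ≤ v ⬝ᵥ v :=
  Fintype.sum_nonneg fun i => mul_self_nonneg (v i)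

lemma sq_dotProduct_le (u v : n → ℝ) : (u ⬝ᵥ v) ^ 2 ≤ (u ⬝ᵥ u) * (v ⬝ᵥ v) := by
  simpa only [dotProduct, sq] using Finset.sum_mul_sq_le_sq_mul_sq Finset.univ u v

lemma abs_dotProduct_lt_one {u v : n → ℝ} (hu : u ⬝ᵥ u ≤ 1) (hv : v ⬝ᵥ v < 1) :
    |u ⬝ᵥ v| < 1 := by
  rw [← sq_lt_one_iff_abs_lt_one]
  nlinarith [sq_dotProduct_le u v, dotProduct_self_nonneg v]

lemma mulVec_dotProduct_eq (A : Matrix m n ℝ) (u : n → ℝ) (v : m → ℝ) :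
    (A *ᵥ u) ⬝ᵥ v = u ⬝ᵥ (Aᵀ *ᵥ v) := by
  rw [dotProduct_transpose_mulVec, dotProduct_comm]

lemma dotProduct_const_self (c : ℝ) :
    (fun _ : n => c) ⬝ᵥ (fun _ => c) = Fintype.card n * c ^ 2 := by
  simp [dotProduct, sq]

end DotProduct

lemma const_inv_sqrt_dotProduct_self_lt_one {d dOne : ℕ} (hdOne : 1 ≤ dOne) (hd : dOne ≤ d) :
    (fun _ : Fin (d - dOne) => 1 / √(d : ℝ)) ⬝ᵥ (fun _ => 1 / √(d : ℝ)) < 1 := by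
  have hd0 : (0 : ℝ) < d := by exact_mod_cast hdOne.trans hd
  have hdOne' : (1 : ℝ) ≤ dOne := by exact_mod_cast hdOne
  rw [dotProduct_const_self, Fintype.card_fin, div_pow, one_pow, Real.sq_sqrt hd0.le,
    Nat.cast_sub hd, mul_one_div, div_lt_one hd0]
  linarith

section OrthonormalColumns

variable {m n : Type*} [Fintype m] [Fintype n] [DecidableEq n] {Q : Matrix m n ℝ}

lemma transpose_mulVec_mulVec_of_orthonormal (hQ : Qᵀ * Q = 1) (v : n → ℝ) :
    Qᵀ *ᵥ (Q *ᵥ v) = v := by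
  rw [mulVec_mulVec, hQ, one_mulVec]

lemma mulVec_dotProduct_mulVec_of_orthonormal (hQ : Qᵀ * Q = 1) (u v : n → ℝ) :
    (Q *ᵥ u) ⬝ᵥ (Q *ᵥ v) = u ⬝ᵥ v := by
  rw [mulVec_dotProduct_eq, transpose_mulVec_mulVec_of_orthonormal hQ]

lemma residual_dotProduct_self (hQ : Qᵀ * Q = 1) {y : m → ℝ} (hy : Qᵀ *ᵥ y = 0)
    (hyy : y ⬝ᵥ y ≠ 0) (x : m → ℝ) :
    (x - (Q * Qᵀ + (y ⬝ᵥ y)⁻¹ • vecMulVec y y) *ᵥ x) ⬝ᵥ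
        (x - (Q * Qᵀ + (y ⬝ᵥ y)⁻¹ • vecMulVec y y) *ᵥ x)
      = x ⬝ᵥ x - (Qᵀ *ᵥ x) ⬝ᵥ (Qᵀ *ᵥ x) - (y ⬝ᵥ x) ^ 2 / (y ⬝ᵥ y) := by
  have hpx : (Q *ᵥ (Qᵀ *ᵥ x)) ⬝ᵥ x = (Qᵀ *ᵥ x) ⬝ᵥ (Qᵀ *ᵥ x) := mulVec_dotProduct_eq _ _ _
  have hpp : (Q *ᵥ (Qᵀ *ᵥ x)) ⬝ᵥ (Q *ᵥ (Qᵀ *ᵥ x)) = (Qᵀ *ᵥ x) ⬝ᵥ (Qᵀ *ᵥ x) :=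
    mulVec_dotProduct_mulVec_of_orthonormal hQ _ _
  have hpy : (Q *ᵥ (Qᵀ *ᵥ x)) ⬝ᵥ y = 0 := by rw [mulVec_dotProduct_eq, hy, dotProduct_zero]
  rw [add_mulVec, ← mulVec_mulVec, smul_mulVec, vecMulVec_mulVec, op_smul_eq_smul, smul_smul]
  simp only [sub_dotProduct, dotProduct_sub, add_dotProduct, dotProduct_add, smul_dotProduct,
    dotProduct_smul, smul_eq_mul]
  rw [dotProduct_comm x (Q *ᵥ _), dotProduct_comm y (Q *ᵥ _), dotProduct_comm x y, hpx, hpp, hpy]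
  field_simp
  ring

end OrthonormalColumns

section ComplementaryProjections

variable {m k n : Type*} [Fintype m] [DecidableEq m] [Fintype k] [Fintype n]
  {U : Matrix m k ℝ} {Up : Matrix m n ℝ}

lemma mulVec_transpose_mulVec_add (hfull : U * Uᵀ + Up * Upᵀ = 1) (z : m → ℝ) :
    U *ᵥ (Uᵀ *ᵥ z) + Up *ᵥ (Upᵀ *ᵥ z) = z := by
  rw [mulVec_mulVec, mulVec_mulVec, ← add_mulVec, hfull, one_mulVec]

lemma transpose_mulVec_dotProduct_self_add (hfull : U * Uᵀ + Up * Upᵀ = 1) (z : m → ℝ) :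
    (Uᵀ *ᵥ z) ⬝ᵥ (Uᵀ *ᵥ z) + (Upᵀ *ᵥ z) ⬝ᵥ (Upᵀ *ᵥ z) = z ⬝ᵥ z := by
  calc (Uᵀ *ᵥ z) ⬝ᵥ (Uᵀ *ᵥ z) + (Upᵀ *ᵥ z) ⬝ᵥ (Upᵀ *ᵥ z)
      = (U *ᵥ (Uᵀ *ᵥ z) + Up *ᵥ (Upᵀ *ᵥ z)) ⬝ᵥ z := by
        rw [add_dotProduct, mulVec_dotProduct_eq U, mulVec_dotProduct_eq Up]
    _ = z ⬝ᵥ z := by rw [mulVec_transpose_mulVec_add hfull]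

lemma projection_dotProduct_self_le [DecidableEq k] (hU : Uᵀ * U = 1)
    (hfull : U * Uᵀ + Up * Upᵀ = 1) (z : m → ℝ) :
    (U *ᵥ (Uᵀ *ᵥ z)) ⬝ᵥ (U *ᵥ (Uᵀ *ᵥ z)) ≤ z ⬝ᵥ z := by
  rw [mulVec_dotProduct_mulVec_of_orthonormal hU, ← transpose_mulVec_dotProduct_self_add hfull z]
  linarith [dotProduct_self_nonneg (Upᵀ *ᵥ z)]

end ComplementaryProjections

lemma transpose_mulVec_mulVec_eq_zero {m k n : Type*} [Fintype m] [Fintype k]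
    {U : Matrix m k ℝ} {Up : Matrix m n ℝ} (hUUp : Uᵀ * Up = 0) (v : k → ℝ) :
    Upᵀ *ᵥ (U *ᵥ v) = 0 := by
  have hUpU : Upᵀ * U = 0 := by simpa using congrArg transpose hUUp
  rw [mulVec_mulVec, hUpU, zero_mulVec]

lemma div_mem_Ioc_of_mem_Ioo {A σ K : ℝ} (hA : A ∈ Set.Ioo 9 11) (hK : 0 < K) (hσ : 1 / K ≤ σ)
    (hσ1 : σ ≤ 1) : A / σ ∈ Set.Ioc 9 (11 * K) := by
  have hσ0 : 0 < σ := (one_div_pos.mpr hK).trans_le hσ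
  have hKσ : 1 ≤ K * σ := by rwa [div_le_iff₀' hK] at hσ
  constructor
  · rw [lt_div_iff₀ hσ0]; nlinarith [hA.1]
  · rw [div_le_iff₀ hσ0]; nlinarith [hA.2]

lemma loss_budget_le {s K Δ : ℝ} (hK : 1 ≤ K) (hΔ : Δ ∈ Set.Ioc 9 (11 * K)) :
    (1 + 1 / 100) ^ 2 * s ^ 2 * (Δ ^ 2 + 1) ≤ (12 * K * s) ^ 2 := by
  have : Δ ^ 2 + 1 ≤ 122 * K ^ 2 := by nlinarith [hΔ.1, hΔ.2]
  nlinarith [sq_nonneg s]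

lemma sq_le_sq_div_of_mul_sqrt_le {a b q : ℝ} (hq : 0 < q) (hb : 0 ≤ b) (h : b * √q ≤ a) :
    b ^ 2 ≤ a ^ 2 / q := by
  rw [le_div_iff₀ hq, ← Real.sq_sqrt hq.le, ← mul_pow]
  exact pow_le_pow_left₀ (mul_nonneg hb (Real.sqrt_nonneg q)) h 2

lemma pow_mul_inv_pow_le_one {d : ℝ} (hd : 5 ≤ d) : 145200 * (d ^ 4) ^ 3 * (1 / d ^ 20) ≤ 1 := by
  have h8 : (5 : ℝ) ^ 8 ≤ d ^ 8 := pow_le_pow_left₀ (by norm_num) hd 8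
  rw [← pow_mul, mul_one_div, div_le_one (by positivity),
    show d ^ 20 = d ^ 8 * d ^ (4 * 3) by ring]
  nlinarith [pow_pos (show 0 < d by linarith) (4 * 3)]

section LossBounds

variable {m k n : Type*} [Fintype m] [Fintype k] [Fintype n] [DecidableEq n]
  {U : Matrix m k ℝ} {Up : Matrix m n ℝ} {z : m → ℝ}

lemma offset_mem_Ioo (hUp : Upᵀ * Up = 1)
    (hz : (Up *ᵥ (Upᵀ *ᵥ z)) ⬝ᵥ (Up *ᵥ (Upᵀ *ᵥ z)) ≤ 1) {c : n → ℝ} (hc : c ⬝ᵥ c < 1) :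
    10 - (Up *ᵥ (Upᵀ *ᵥ z)) ⬝ᵥ (Up *ᵥ c) ∈ Set.Ioo 9 11 := by
  have h := abs_dotProduct_lt_one hz
    ((mulVec_dotProduct_mulVec_of_orthonormal hUp c c).trans_lt hc)
  constructor <;> linarith [abs_lt.mp h]

lemma projection_sub_le_of_loss_le (hUp : Upᵀ * Up = 1) {x : m → ℝ} {c : n → ℝ} {s B : ℝ}
    (hB : 0 ≤ B) (hloss : (Upᵀ *ᵥ x - c) ⬝ᵥ (Upᵀ *ᵥ x - c) + 1 / 100 * (z ⬝ᵥ x - 10) ^ 2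
      + s ^ 2 * (x ⬝ᵥ x) ≤ B ^ 2) :
    √((Up *ᵥ (Upᵀ *ᵥ x) - Up *ᵥ c) ⬝ᵥ (Up *ᵥ (Upᵀ *ᵥ x) - Up *ᵥ c)) ≤ B := by
  rw [← mulVec_sub, mulVec_dotProduct_mulVec_of_orthonormal hUp, Real.sqrt_le_left hB]
  nlinarith [sq_nonneg (z ⬝ᵥ x - 10), dotProduct_self_nonneg x]

lemma abs_offset_sub_le_of_loss_le [DecidableEq m] (hUp : Upᵀ * Up = 1)
    (hfull : U * Uᵀ + Up * Upᵀ = 1) (hz : z ⬝ᵥ z ≤ 1) {x : m → ℝ} {c : n → ℝ} {s B : ℝ}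
    (hB : 0 ≤ B) (hloss : (Upᵀ *ᵥ x - c) ⬝ᵥ (Upᵀ *ᵥ x - c) + 1 / 100 * (z ⬝ᵥ x - 10) ^ 2
      + s ^ 2 * (x ⬝ᵥ x) ≤ B ^ 2) :
    |x ⬝ᵥ U *ᵥ (Uᵀ *ᵥ z) - (10 - (Up *ᵥ (Upᵀ *ᵥ z)) ⬝ᵥ (Up *ᵥ c))| ≤ 11 * B := by
  set a := Upᵀ *ᵥ z
  set w := Upᵀ *ᵥ x - c
  have hsplit : x ⬝ᵥ U *ᵥ (Uᵀ *ᵥ z) - (10 - (Up *ᵥ a) ⬝ᵥ (Up *ᵥ c))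
      = (z ⬝ᵥ x - 10) - a ⬝ᵥ w := by
    have hzx : z ⬝ᵥ x = (U *ᵥ (Uᵀ *ᵥ z)) ⬝ᵥ x + a ⬝ᵥ (Upᵀ *ᵥ x) := by
      rw [← mulVec_dotProduct_eq, ← add_dotProduct, mulVec_transpose_mulVec_add hfull]
    rw [mulVec_dotProduct_mulVec_of_orthonormal hUp, dotProduct_comm x, dotProduct_sub, hzx]
    ring
  have hw : 0 ≤ w ⬝ᵥ w := dotProduct_self_nonneg w
  have hxx : 0 ≤ s ^ 2 * (x ⬝ᵥ x) := mul_nonneg (sq_nonneg s) (dotProduct_self_nonneg x)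
  have he : |z ⬝ᵥ x - 10| ≤ 10 * B :=
    abs_le_of_sq_le_sq (by nlinarith [sq_nonneg (z ⬝ᵥ x - 10)]) (by positivity)
  have ha : a ⬝ᵥ a ≤ 1 := by
    linarith [transpose_mulVec_dotProduct_self_add hfull z, dotProduct_self_nonneg (Uᵀ *ᵥ z)]
  have haw : |a ⬝ᵥ w| ≤ B := by
    refine abs_le_of_sq_le_sq ?_ hB
    nlinarith [sq_dotProduct_le a w, dotProduct_self_nonneg a, sq_nonneg (z ⬝ᵥ x - 10)]
  calc _ = |(z ⬝ᵥ x - 10) - a ⬝ᵥ w| := by rw [hsplit]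
    _ ≤ |z ⬝ᵥ x - 10| + |a ⬝ᵥ w| := abs_sub _ _
    _ ≤ 11 * B := by linarith

lemma residual_le_of_loss_le (hUp : Upᵀ * Up = 1) (hUUp : Uᵀ * Up = 0) {x : m → ℝ}
    {c : n → ℝ} {s K Δ : ℝ} (hs : 0 < s) (hKs : 145200 * K ^ 3 * s ≤ 1)
    (hσ : 1 / K ≤ √((U *ᵥ (Uᵀ *ᵥ z)) ⬝ᵥ (U *ᵥ (Uᵀ *ᵥ z)))) (hΔ : Δ ∈ Set.Ioc 9 (11 * K))
    (hloss : (Upᵀ *ᵥ x - c) ⬝ᵥ (Upᵀ *ᵥ x - c) + 1 / 100 * (z ⬝ᵥ x - 10) ^ 2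
      + s ^ 2 * (x ⬝ᵥ x) ≤ (1 + 1 / 100) ^ 2 * s ^ 2 * (Δ ^ 2 + 1))
    (hoff : |x ⬝ᵥ U *ᵥ (Uᵀ *ᵥ z) - Δ * √((U *ᵥ (Uᵀ *ᵥ z)) ⬝ᵥ (U *ᵥ (Uᵀ *ᵥ z)))|
      ≤ 11 * (12 * K * s)) :
    √((x - (Up * Upᵀ + ((U *ᵥ (Uᵀ *ᵥ z)) ⬝ᵥ (U *ᵥ (Uᵀ *ᵥ z)))⁻¹ •
        vecMulVec (U *ᵥ (Uᵀ *ᵥ z)) (U *ᵥ (Uᵀ *ᵥ z))) *ᵥ x) ⬝ᵥ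
      (x - (Up * Upᵀ + ((U *ᵥ (Uᵀ *ᵥ z)) ⬝ᵥ (U *ᵥ (Uᵀ *ᵥ z)))⁻¹ •
        vecMulVec (U *ᵥ (Uᵀ *ᵥ z)) (U *ᵥ (Uᵀ *ᵥ z))) *ᵥ x)) ≤ 2 * (1 / 10) * Δ := by
  set zU := U *ᵥ (Uᵀ *ᵥ z)
  set σ := √(zU ⬝ᵥ zU)
  have hK : 0 < K := by linarith [hΔ.1, hΔ.2]
  have hσ0 : 0 < σ := (one_div_pos.mpr hK).trans_le hσ
  have hq : 0 < zU ⬝ᵥ zU := Real.sqrt_pos.mp hσ0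
  have hKσ : 1 ≤ K * σ := by rwa [div_le_iff₀' hK] at hσ
  rw [residual_dotProduct_self hUp (transpose_mulVec_mulVec_eq_zero hUUp _) hq.ne',
    Real.sqrt_le_left (by linarith [hΔ.1])]
  -- `⟨z_U, x⟩ / σ ≥ Δ - τ` by `hoff`, since `1 / σ ≤ K`
  set τ := 11 * (12 * K * s) * K
  have hτ : 0 ≤ τ := by positivity
  have hΔτ : Δ * τ ≤ 1 / 100 := by
    have : Δ * τ ≤ 11 * K * τ := mul_le_mul_of_nonneg_right hΔ.2 hτ
    nlinarith
  have ha : (Δ - τ) * σ ≤ zU ⬝ᵥ x := by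
    have := (abs_le.mp hoff).1
    rw [dotProduct_comm] at this
    nlinarith
  have hzUx := sq_le_sq_div_of_mul_sqrt_le hq (by nlinarith [hΔ.1]) ha
  have hX : x ⬝ᵥ x ≤ (1 + 1 / 100) ^ 2 * (Δ ^ 2 + 1) := by
    refine le_of_mul_le_mul_left ?_ (pow_pos hs 2)
    nlinarith [dotProduct_self_nonneg (Upᵀ *ᵥ x - c), sq_nonneg (z ⬝ᵥ x - 10)]
  nlinarith [hΔ.1, sq_nonneg τ, dotProduct_self_nonneg (Upᵀ *ᵥ x)]

end LossBounds
/-- Claim 4.11: decomposition of an approximately optimal regression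
solution. There is a constant `D₀` such that for all `d ≥ D₀`: with `λ = d^{−40}`,
`ε = 1/100`, `x* = (1/√d)·Σ_j U⊥_{·,j}`, and `z` with `‖z‖₂ ≤ 1`, `‖z_U‖₂ ≥ 1/d⁴`, setting
`Δ = (10 − ⟨z_{U⊥}, x*⟩)/‖z_U‖₂` we have `Δ ∈ (9, 11d⁴]`, and every `x` with
`L(x) ≤ (1+ε)²λ(Δ²+1)` satisfies the three stated estimates (here `W = VVᵀ` for
`V = [U⊥, z_U/‖z_U‖₂]`, i.e. `W = U⊥U⊥ᵀ + z_U z_Uᵀ/‖z_U‖₂²`). -/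
theorem approx_solution_decomposition :
    ∃ D₀ : ℕ, ∀ d : ℕ, D₀ ≤ d → ∀ dOne : ℕ, 1 ≤ dOne → dOne ≤ d →
    ∀ (U : Matrix (Fin d) (Fin dOne) ℝ) (Up : Matrix (Fin d) (Fin (d - dOne)) ℝ),
      Uᵀ * U = 1 → Upᵀ * Up = 1 → Uᵀ * Up = 0 → U * Uᵀ + Up * Upᵀ = 1 →
    ∀ z : Fin d → ℝ, Real.sqrt (z ⬝ᵥ z) ≤ 1 →
    ∀ lam ε : ℝ, lam = 1 / (d : ℝ) ^ 40 → ε = 1 / 100 →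
    ∀ xstar : Fin d → ℝ, xstar = Up *ᵥ (fun _ => 1 / Real.sqrt (d : ℝ)) →
    ∀ zU zUp : Fin d → ℝ, zU = U *ᵥ (Uᵀ *ᵥ z) → zUp = Up *ᵥ (Upᵀ *ᵥ z) →
      1 / (d : ℝ) ^ 4 ≤ Real.sqrt (zU ⬝ᵥ zU) →
    ∀ Δ : ℝ, Δ = (10 - zUp ⬝ᵥ xstar) / Real.sqrt (zU ⬝ᵥ zU) →
    ∀ L : (Fin d → ℝ) → ℝ,
      (∀ x, L x = (Upᵀ *ᵥ x - (fun _ => 1 / Real.sqrt (d : ℝ)))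
                    ⬝ᵥ (Upᵀ *ᵥ x - (fun _ => 1 / Real.sqrt (d : ℝ)))
        + (1 / 100) * (z ⬝ᵥ x - 10) ^ 2 + lam * (x ⬝ᵥ x)) →
    ∀ W : Matrix (Fin d) (Fin d) ℝ,
      W = Up * Upᵀ + (zU ⬝ᵥ zU)⁻¹ • vecMulVec zU zU →
    (9 < Δ ∧ Δ ≤ 11 * (d : ℝ) ^ 4) ∧
    ∀ x : Fin d → ℝ, L x ≤ (1 + ε) ^ 2 * lam * (Δ ^ 2 + 1) →
      Real.sqrt ((Up *ᵥ (Upᵀ *ᵥ x) - xstar) ⬝ᵥ (Up *ᵥ (Upᵀ *ᵥ x) - xstar))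
          ≤ 20 * (d : ℝ) ^ 4 * Real.sqrt lam ∧
      |x ⬝ᵥ zU - (10 - zUp ⬝ᵥ xstar)| ≤ 200 * (d : ℝ) ^ 4 * Real.sqrt lam ∧
      Real.sqrt ((x - W *ᵥ x) ⬝ᵥ (x - W *ᵥ x)) ≤ 2 * Real.sqrt ε * Δ := by
  refine ⟨5, fun d hd dOne hdOne hdle U Up hUU hUpUp hUUp hfull z hz lam ε hlam hε xstar hxstar
    zU zUp hzU hzUp hσ Δ hΔ L hL W hW => ?_⟩
  subst hε hxstar hzU hzUp hW
  have hd : (5 : ℝ) ≤ d := by exact_mod_cast hd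
  have hK : (1 : ℝ) ≤ (d : ℝ) ^ 4 := one_le_pow₀ (by linarith)
  have hlam_sq : lam = (1 / (d : ℝ) ^ 20) ^ 2 := by rw [hlam]; ring
  have hz : z ⬝ᵥ z ≤ 1 := Real.sqrt_le_one.mp hz
  have hA := offset_mem_Ioo hUpUp
    ((projection_dotProduct_self_le hUpUp ((add_comm _ _).trans hfull) z).trans hz)
    (const_inv_sqrt_dotProduct_self_lt_one hdOne hdle)
  have hΔ_mem : Δ ∈ Set.Ioc 9 (11 * (d : ℝ) ^ 4) := hΔ ▸ div_mem_Ioc_of_mem_Ioo hA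
    (by positivity) hσ (Real.sqrt_le_one.mpr ((projection_dotProduct_self_le hUU hfull z).trans hz))
  refine ⟨hΔ_mem, fun x hx => ?_⟩
  rw [hL, hlam_sq] at hx
  have hbudget := hx.trans (loss_budget_le hK hΔ_mem)
  have hoff := abs_offset_sub_le_of_loss_le hUpUp hfull hz (by positivity) hbudget
  have hA_eq : 10 - (Up *ᵥ (Upᵀ *ᵥ z)) ⬝ᵥ (Up *ᵥ fun _ => 1 / √(d : ℝ))
      = Δ * √((U *ᵥ (Uᵀ *ᵥ z)) ⬝ᵥ (U *ᵥ (Uᵀ *ᵥ z))) := by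
    rw [hΔ, div_mul_cancel₀ _ ((one_div_pos.mpr (by positivity)).trans_le hσ).ne']
  rw [hlam_sq, Real.sqrt_sq (by positivity), show √(1 / 100 : ℝ) = 1 / 10 by
    rw [show (1 / 100 : ℝ) = (1 / 10) ^ 2 by norm_num, Real.sqrt_sq (by norm_num)]]
  have hB : 0 ≤ (d : ℝ) ^ 4 * (1 / (d : ℝ) ^ 20) := by positivity
  refine ⟨(projection_sub_le_of_loss_le hUpUp (by positivity) hbudget).trans (by linarith),
    hoff.trans (by linarith), ?_⟩
  exact residual_le_of_loss_le hUpUp hUUp (by positivity) (pow_mul_inv_pow_le_one hd) hσ hΔ_mem hx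
    (hA_eq ▸ hoff)
end

section
/- Let d₁ ∈ [d], let U ∈ ℝ^{d×d₁} and U⊥ ∈ ℝ^{d×(d−d₁)} have orthonormal columns with [U, U⊥] orthogonal, and for v ∈ ℝ^d write v_U = UUᵀv and v_{U⊥} = U⊥U⊥ᵀv. Let λ > 0, x* = (1/√d)·Σ_{j=1}^{d−d₁} U⊥_{·,j}, and let z ∈ ℝ^d satisfy ‖z‖₂ ≤ 1 and z_U ≠ 0. Set Δ = (10 − ⟨z_{U⊥}, x*⟩)/‖z_U‖₂ and define the candidate solution x*_t = x* + ((10 − ⟨z_{U⊥}, x*⟩)/‖z_U‖₂²)·z_U. Then: (i) U⊥ᵀ x*_t = (1/√d)·1_{d−d₁}; (ii) ⟨z, x*_t⟩ = 10; and hence (iii) L(x*_t) = λ‖x*_t‖₂² ≤ λ·(Δ² + 1), where L(x) = ‖U⊥ᵀ x − (1/√d)·1_{d−d₁}‖₂² + (1/100)·(⟨z, x⟩ − 10)² + λ‖x‖₂². -/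
open Matrix

/-!
The correction term is a multiple of `z_U`, which `U⊥ᵀ` kills and which is orthogonal to `x*`.
So it leaves `U⊥ᵀ x* = (1/√d)·1` unchanged, and since `⟨z, z_U⟩ = ‖z_U‖²` and
`⟨z, x*⟩ = ⟨z_{U⊥}, x*⟩`, its coefficient is exactly the one making `⟨z, x*_t⟩ = 10`. Both
residual terms of `L` then vanish, and by Pythagoras `‖x*_t‖² = ‖x*‖² + Δ² ≤ 1 + Δ²`.
-/

section Orthonormal

variable {m n p : Type*} [Fintype m] [Fintype n]

theorem transpose_mulVec_mulVec_eq_zero_s19 {A : Matrix m n ℝ} {B : Matrix m p ℝ}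
    (hAB : Aᵀ * B = 0) (x : n → ℝ) : Bᵀ *ᵥ (A *ᵥ x) = 0 := by
  rw [mulVec_mulVec, show Bᵀ * A = (Aᵀ * B)ᵀ by simp, hAB, transpose_zero, zero_mulVec]

variable [Fintype p]

theorem mulVec_dotProduct_mulVec (A : Matrix m n ℝ) (B : Matrix m p ℝ) (x : n → ℝ) (y : p → ℝ) :
    (A *ᵥ x) ⬝ᵥ (B *ᵥ y) = x ⬝ᵥ ((Aᵀ * B) *ᵥ y) := by
  rw [← mulVec_mulVec, dotProduct_mulVec x, vecMul_transpose]

theorem mulVec_dotProduct_mulVec_eq_zero {A : Matrix m n ℝ} {B : Matrix m p ℝ}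
    (hAB : Aᵀ * B = 0) (x : n → ℝ) (y : p → ℝ) : (A *ᵥ x) ⬝ᵥ (B *ᵥ y) = 0 := by
  rw [mulVec_dotProduct_mulVec, hAB, zero_mulVec, dotProduct_zero]

variable [DecidableEq n]

theorem transpose_mulVec_mulVec_of_orthonormal_s19 {A : Matrix m n ℝ} (hA : Aᵀ * A = 1)
    (x : n → ℝ) : Aᵀ *ᵥ (A *ᵥ x) = x := by
  rw [mulVec_mulVec, hA, one_mulVec]

theorem mulVec_dotProduct_self_of_orthonormal {A : Matrix m n ℝ} (hA : Aᵀ * A = 1)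
    (x : n → ℝ) : (A *ᵥ x) ⬝ᵥ (A *ᵥ x) = x ⬝ᵥ x := by
  rw [mulVec_dotProduct_mulVec, hA, one_mulVec]

theorem proj_dotProduct_mulVec_of_orthonormal {A : Matrix m n ℝ} (hA : Aᵀ * A = 1)
    (z : m → ℝ) (y : n → ℝ) : (A *ᵥ (Aᵀ *ᵥ z)) ⬝ᵥ (A *ᵥ y) = z ⬝ᵥ (A *ᵥ y) := by
  rw [mulVec_dotProduct_mulVec, hA, one_mulVec, dotProduct_mulVec, mulVec_transpose]

end Orthonormal

theorem const_inv_sqrt_dotProduct_self_le_one {k d : ℕ} (hk : k ≤ d) :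
    (fun _ : Fin k => 1 / Real.sqrt (d : ℝ)) ⬝ᵥ (fun _ => 1 / Real.sqrt (d : ℝ)) ≤ 1 := by
  have hsum : (fun _ : Fin k => 1 / Real.sqrt (d : ℝ)) ⬝ᵥ (fun _ => 1 / Real.sqrt (d : ℝ))
      = (k : ℝ) / d := by
    simp only [dotProduct, Finset.sum_const, Finset.card_univ, Fintype.card_fin, nsmul_eq_mul]
    rw [div_mul_div_comm, one_mul, Real.mul_self_sqrt (Nat.cast_nonneg d), mul_one_div]
  rw [hsum]
  exact div_le_one_of_le₀ (by exact_mod_cast hk) (Nat.cast_nonneg d)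

theorem div_sq_mul_self_eq_div_sqrt_sq (a : ℝ) {s : ℝ} (hs : 0 ≤ s) :
    (a / s) ^ 2 * s = (a / Real.sqrt s) ^ 2 := by
  rw [div_pow, div_pow, Real.sq_sqrt hs]
  rcases hs.eq_or_lt with rfl | hs
  · simp
  · field_simp

section Candidate

variable {n : Type*} [Fintype n] {z p x : n → ℝ}

theorem dotProduct_add_div_smul_eq (hzp : z ⬝ᵥ p = p ⬝ᵥ p) (hp : p ≠ 0) {a : ℝ}
    (hzx : z ⬝ᵥ x = a) (c : ℝ) : z ⬝ᵥ (x + ((c - a) / (p ⬝ᵥ p)) • p) = c := by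
  have hpp : p ⬝ᵥ p ≠ 0 := dotProduct_self_eq_zero.not.mpr hp
  rw [dotProduct_add, dotProduct_smul, hzx, hzp, smul_eq_mul, div_mul_cancel₀ _ hpp]
  ring

theorem add_smul_dotProduct_self_of_orthogonal (hpx : p ⬝ᵥ x = 0) (t : ℝ) :
    (x + t • p) ⬝ᵥ (x + t • p) = x ⬝ᵥ x + t ^ 2 * (p ⬝ᵥ p) := by
  have hxp : x ⬝ᵥ p = 0 := by rwa [dotProduct_comm]
  simp only [dotProduct_add, add_dotProduct, dotProduct_smul, smul_dotProduct, hpx, hxp,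
    smul_eq_mul]
  ring

end Candidate

theorem candidate_solution_loss_bound_general
    (d dOne : ℕ)
    (U : Matrix (Fin d) (Fin dOne) ℝ) (Up : Matrix (Fin d) (Fin (d - dOne)) ℝ)
    (hU : Uᵀ * U = 1) (hUp : Upᵀ * Up = 1) (hUUp : Uᵀ * Up = 0)
    (lam : ℝ) (hlam : 0 < lam)
    (z : Fin d → ℝ)
    (zU zUp : Fin d → ℝ) (hzU : zU = U *ᵥ (Uᵀ *ᵥ z)) (hzUp : zUp = Up *ᵥ (Upᵀ *ᵥ z))
    (hzU0 : zU ≠ 0)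
    (xstar : Fin d → ℝ) (hxstar : xstar = Up *ᵥ (fun _ => 1 / Real.sqrt (d : ℝ)))
    (Δ : ℝ) (hΔ : Δ = (10 - zUp ⬝ᵥ xstar) / Real.sqrt (zU ⬝ᵥ zU))
    (xt : Fin d → ℝ) (hxt : xt = xstar + ((10 - zUp ⬝ᵥ xstar) / (zU ⬝ᵥ zU)) • zU)
    (L : (Fin d → ℝ) → ℝ)
    (hL : ∀ x, L x = (Upᵀ *ᵥ x - (fun _ => 1 / Real.sqrt (d : ℝ)))
        ⬝ᵥ (Upᵀ *ᵥ x - (fun _ => 1 / Real.sqrt (d : ℝ)))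
      + (1 / 100) * (z ⬝ᵥ x - 10) ^ 2 + lam * (x ⬝ᵥ x)) :
    (Upᵀ *ᵥ xt = fun _ => 1 / Real.sqrt (d : ℝ)) ∧
    z ⬝ᵥ xt = 10 ∧
    L xt = lam * (xt ⬝ᵥ xt) ∧
    lam * (xt ⬝ᵥ xt) ≤ lam * (Δ ^ 2 + 1) := by
  have hUpxt : Upᵀ *ᵥ xt = fun _ => 1 / Real.sqrt (d : ℝ) := by
    rw [hxt, mulVec_add, mulVec_smul, hxstar, transpose_mulVec_mulVec_of_orthonormal_s19 hUp, hzU,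
      transpose_mulVec_mulVec_eq_zero_s19 hUUp, smul_zero, add_zero]
  have hzzU : z ⬝ᵥ zU = zU ⬝ᵥ zU := by
    rw [hzU, proj_dotProduct_mulVec_of_orthonormal hU]
  have hzxstar : z ⬝ᵥ xstar = zUp ⬝ᵥ xstar := by
    rw [hzUp, hxstar, proj_dotProduct_mulVec_of_orthonormal hUp]
  have hzxt : z ⬝ᵥ xt = 10 := hxt ▸ dotProduct_add_div_smul_eq hzzU hzU0 hzxstar 10
  have hxstar_le : xstar ⬝ᵥ xstar ≤ 1 := by
    rw [hxstar, mulVec_dotProduct_self_of_orthonormal hUp]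
    exact const_inv_sqrt_dotProduct_self_le_one (Nat.sub_le d dOne)
  have hcorr : ((10 - zUp ⬝ᵥ xstar) / (zU ⬝ᵥ zU)) ^ 2 * (zU ⬝ᵥ zU) = Δ ^ 2 := by
    rw [hΔ, div_sq_mul_self_eq_div_sqrt_sq]
    simpa using dotProduct_star_self_nonneg zU
  have hzUxstar : zU ⬝ᵥ xstar = 0 := by
    rw [hzU, hxstar]
    exact mulVec_dotProduct_mulVec_eq_zero hUUp _ _
  have hxtxt : xt ⬝ᵥ xt = xstar ⬝ᵥ xstar + Δ ^ 2 := by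
    rw [hxt, add_smul_dotProduct_self_of_orthogonal hzUxstar, hcorr]
  refine ⟨hUpxt, hzxt, ?_, ?_⟩
  · simp [hL, hUpxt, hzxt]
  · gcongr
    linarith

/-- candidate-solution computation, Eq. (11) in Section 4.3. With
`x* = (1/√d)·Σ_j U⊥_{·,j}` and `z` with `‖z‖₂ ≤ 1`, `z_U ≠ 0`, the candidate
`x*_t = x* + ((10 − ⟨z_{U⊥}, x*⟩)/‖z_U‖₂²)·z_U` satisfies: (i) `U⊥ᵀ x*_t = (1/√d)·1`;
(ii) `⟨z, x*_t⟩ = 10`; hence (iii) `L(x*_t) = λ‖x*_t‖₂² ≤ λ(Δ² + 1)` where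
`Δ = (10 − ⟨z_{U⊥}, x*⟩)/‖z_U‖₂`. -/
theorem candidate_solution_loss_bound
    (d dOne : ℕ) (hd1 : 1 ≤ dOne) (hd2 : dOne ≤ d)
    (U : Matrix (Fin d) (Fin dOne) ℝ) (Up : Matrix (Fin d) (Fin (d - dOne)) ℝ)
    (hU : Uᵀ * U = 1) (hUp : Upᵀ * Up = 1) (hUUp : Uᵀ * Up = 0)
    (hcomplete : U * Uᵀ + Up * Upᵀ = 1)
    (lam : ℝ) (hlam : 0 < lam)
    (z : Fin d → ℝ) (hz : Real.sqrt (z ⬝ᵥ z) ≤ 1)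
    (zU zUp : Fin d → ℝ) (hzU : zU = U *ᵥ (Uᵀ *ᵥ z)) (hzUp : zUp = Up *ᵥ (Upᵀ *ᵥ z))
    (hzU0 : zU ≠ 0)
    (xstar : Fin d → ℝ) (hxstar : xstar = Up *ᵥ (fun _ => 1 / Real.sqrt (d : ℝ)))
    (Δ : ℝ) (hΔ : Δ = (10 - zUp ⬝ᵥ xstar) / Real.sqrt (zU ⬝ᵥ zU))
    (xt : Fin d → ℝ) (hxt : xt = xstar + ((10 - zUp ⬝ᵥ xstar) / (zU ⬝ᵥ zU)) • zU)
    (L : (Fin d → ℝ) → ℝ)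
    (hL : ∀ x, L x = (Upᵀ *ᵥ x - (fun _ => 1 / Real.sqrt (d : ℝ)))
        ⬝ᵥ (Upᵀ *ᵥ x - (fun _ => 1 / Real.sqrt (d : ℝ)))
      + (1 / 100) * (z ⬝ᵥ x - 10) ^ 2 + lam * (x ⬝ᵥ x)) :
    (Upᵀ *ᵥ xt = fun _ => 1 / Real.sqrt (d : ℝ)) ∧
    z ⬝ᵥ xt = 10 ∧
    L xt = lam * (xt ⬝ᵥ xt) ∧
    lam * (xt ⬝ᵥ xt) ≤ lam * (Δ ^ 2 + 1) :=
  candidate_solution_loss_bound_general d dOne U Up hU hUp hUUp lam hlam z zU zUp hzU hzUp hzU0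
    xstar hxstar Δ hΔ xt hxt L hL
end
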